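/- arXiv:1812.11809 — 6 statements merged into one kernel-verified Lean document; each statement's English description precedes it below -/
import Mathlib

section
/- For all real numbers λ > 0, c > 0 and β > 0, one has 1/((λ + c²)/(β⁻² + λ) + 1) ≤ max{ β⁻²/(c² + β⁻²), 1/2 }. -/
/-! With `b = β⁻²` the left-hand side simplifies to `(b + λ) / ((c² + b) + 2λ)`, the mediant of
`b / (c² + b)` and `λ / (2λ) = 1/2`, and a mediant never exceeds the larger of the two fractions. -/

theorem div_add_div_le_max_div {K : Type*} [Field K] [LinearOrder K] [IsStrictOrderedRing K]
    {p q r s : K} (hq : 0 < q) (hs : 0 < s) :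
    (p + r) / (q + s) ≤ max (p / q) (r / s) := by
  set m := max (p / q) (r / s)
  have hp : p ≤ m * q := (div_le_iff₀ hq).mp (le_max_left _ _)
  have hr : r ≤ m * s := (div_le_iff₀ hs).mp (le_max_right _ _)
  rw [div_le_iff₀ (add_pos hq hs)]
  linarith

theorem one_div_div_add_one {K : Type*} [DivisionRing K] {x y : K} (hy : y ≠ 0) :
    1 / (x / y + 1) = y / (x + y) := by
  rw [div_add_one hy, one_div_div]

theorem rate_spec_bound_general (lam c β : ℝ) (hlam : 0 < lam) (hβ : 0 < β) :
    1 / ((lam + c ^ 2) / ((β ^ 2)⁻¹ + lam) + 1) ≤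
      max ((β ^ 2)⁻¹ / (c ^ 2 + (β ^ 2)⁻¹)) (1 / 2) := by
  set b := (β ^ 2)⁻¹
  have hb : 0 < b := by positivity
  have mediant : 1 / ((lam + c ^ 2) / (b + lam) + 1) = (b + lam) / ((c ^ 2 + b) + 2 * lam) := by
    rw [one_div_div_add_one (by positivity)]
    congr 1
    ring
  have half : lam / (2 * lam) = 1 / 2 := by field_simp
  rw [mediant, ← half]
  exact div_add_div_le_max_div (by positivity) (by positivity)

/-- For all real numbers `λ > 0`, `c > 0` and `β > 0`, one has
`1/((λ + c²)/(β⁻² + λ) + 1) ≤ max { β⁻²/(c² + β⁻²), 1/2 }`. -/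
theorem rate_spec_bound (lam c β : ℝ) (hlam : 0 < lam) (hc : 0 < c) (hβ : 0 < β) :
    1 / ((lam + c ^ 2) / ((β ^ 2)⁻¹ + lam) + 1) ≤
      max ((β ^ 2)⁻¹ / (c ^ 2 + (β ^ 2)⁻¹)) (1 / 2) :=
  rate_spec_bound_general lam c β hlam hβ
end

section
/- Let U, H, Q be real Hilbert spaces, E : U → H and D : U → Q continuous linear maps, and let λ > 0 and c_K > 0 satisfy ‖E w‖ ≥ c_K ‖D w‖ for all w ∈ U. If x ∈ U and s ∈ Q satisfy ⟨E x, E w⟩ + λ ⟨D x, D w⟩ = ⟨s, D w⟩ for all w ∈ U, then (λ + c_K²) ‖D x‖ ≤ ‖s‖ and ‖E x‖² + λ ‖D x‖² ≤ ‖s‖² / (λ + c_K²). -/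
open scoped RealInnerProductSpace

/-!
Testing the variational equation with `w = x` gives the energy identity
`‖E x‖² + λ‖D x‖² = ⟪s, D x⟫ ≤ ‖s‖ ‖D x‖`. Korn's inequality bounds the energy from below by
`(λ + c_K²)‖D x‖²`, which yields the divergence estimate after cancelling one factor `‖D x‖`;
feeding it back into the energy identity gives the energy bound.
-/

theorem sq_mul_sq_le_sq_of_mul_le {c a b : ℝ} (hc : 0 ≤ c) (ha : 0 ≤ a) (h : c * a ≤ b) :
    c ^ 2 * a ^ 2 ≤ b ^ 2 := by
  rw [← mul_pow]
  exact pow_le_pow_left₀ (mul_nonneg hc ha) h 2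

theorem mul_le_of_mul_sq_le_mul {κ d σ : ℝ} (hd : 0 ≤ d) (hσ : 0 ≤ σ)
    (h : κ * d ^ 2 ≤ σ * d) : κ * d ≤ σ := by
  rcases hd.eq_or_lt with rfl | hd
  · simpa using hσ
  · rw [sq, ← mul_assoc] at h
    exact le_of_mul_le_mul_right h hd

theorem le_sq_div_of_le_mul_of_mul_le {e κ d σ : ℝ} (hκ : 0 < κ) (hσ : 0 ≤ σ)
    (he : e ≤ σ * d) (hd : κ * d ≤ σ) : e ≤ σ ^ 2 / κ := by
  rw [le_div_iff₀ hκ]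
  calc e * κ ≤ σ * d * κ := mul_le_mul_of_nonneg_right he hκ.le
    _ = σ * (κ * d) := by ring
    _ ≤ σ ^ 2 := by rw [sq]; exact mul_le_mul_of_nonneg_left hd hσ

section Energy

variable {U H Q : Type*}
  [NormedAddCommGroup U] [InnerProductSpace ℝ U]
  [NormedAddCommGroup H] [InnerProductSpace ℝ H]
  [NormedAddCommGroup Q] [InnerProductSpace ℝ Q]
  {E : U →L[ℝ] H} {D : U →L[ℝ] Q} {lam : ℝ} {x : U} {s : Q}

theorem energy_eq_inner_of_forall_inner_eq
    (hx : ∀ w : U, ⟪E x, E w⟫ + lam * ⟪D x, D w⟫ = ⟪s, D w⟫) :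
    ‖E x‖ ^ 2 + lam * ‖D x‖ ^ 2 = ⟪s, D x⟫ := by
  simpa only [real_inner_self_eq_norm_sq] using hx x

theorem energy_le_norm_mul_norm_of_forall_inner_eq
    (hx : ∀ w : U, ⟪E x, E w⟫ + lam * ⟪D x, D w⟫ = ⟪s, D w⟫) :
    ‖E x‖ ^ 2 + lam * ‖D x‖ ^ 2 ≤ ‖s‖ * ‖D x‖ :=
  (energy_eq_inner_of_forall_inner_eq hx).trans_le (real_inner_le_norm s (D x))

end Energy

theorem elasticity_subproblem_estimate_general
    {U H Q : Type*}
    [NormedAddCommGroup U] [InnerProductSpace ℝ U]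
    [NormedAddCommGroup H] [InnerProductSpace ℝ H]
    [NormedAddCommGroup Q] [InnerProductSpace ℝ Q]
    (E : U →L[ℝ] H) (D : U →L[ℝ] Q)
    (lam cK : ℝ) (hlam : 0 < lam) (hcK : 0 < cK)
    (hKorn : ∀ w : U, cK * ‖D w‖ ≤ ‖E w‖)
    (x : U) (s : Q)
    (hx : ∀ w : U, ⟪E x, E w⟫ + lam * ⟪D x, D w⟫ = ⟪s, D w⟫) :
    (lam + cK ^ 2) * ‖D x‖ ≤ ‖s‖ ∧
      ‖E x‖ ^ 2 + lam * ‖D x‖ ^ 2 ≤ ‖s‖ ^ 2 / (lam + cK ^ 2) := by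
  have hκ : 0 < lam + cK ^ 2 := by positivity
  have hKorn_sq := sq_mul_sq_le_sq_of_mul_le hcK.le (norm_nonneg _) (hKorn x)
  have henergy := energy_le_norm_mul_norm_of_forall_inner_eq hx
  have hdiv : (lam + cK ^ 2) * ‖D x‖ ≤ ‖s‖ :=
    mul_le_of_mul_sq_le_mul (norm_nonneg _) (norm_nonneg _) (by linarith)
  exact ⟨hdiv, le_sq_div_of_le_mul_of_mul_le hκ (norm_nonneg _) henergy hdiv⟩

/-- Abstract elasticity subproblem estimate: if `‖E w‖ ≥ c_K ‖D w‖` for all `w` and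
`⟨E x, E w⟩ + λ⟨D x, D w⟩ = ⟨s, D w⟩` for all `w`, then `(λ + c_K²)‖D x‖ ≤ ‖s‖` and
`‖E x‖² + λ‖D x‖² ≤ ‖s‖²/(λ + c_K²)`. -/
theorem elasticity_subproblem_estimate
    {U H Q : Type*}
    [NormedAddCommGroup U] [InnerProductSpace ℝ U] [CompleteSpace U]
    [NormedAddCommGroup H] [InnerProductSpace ℝ H] [CompleteSpace H]
    [NormedAddCommGroup Q] [InnerProductSpace ℝ Q] [CompleteSpace Q]
    (E : U →L[ℝ] H) (D : U →L[ℝ] Q)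
    (lam cK : ℝ) (hlam : 0 < lam) (hcK : 0 < cK)
    (hKorn : ∀ w : U, cK * ‖D w‖ ≤ ‖E w‖)
    (x : U) (s : Q)
    (hx : ∀ w : U, ⟪E x, E w⟫ + lam * ⟪D x, D w⟫ = ⟪s, D w⟫) :
    (lam + cK ^ 2) * ‖D x‖ ≤ ‖s‖ ∧
      ‖E x‖ ^ 2 + lam * ‖D x‖ ^ 2 ≤ ‖s‖ ^ 2 / (lam + cK ^ 2) :=
  elasticity_subproblem_estimate_general E D lam cK hlam hcK hKorn x s hx
end

section
/- Let U, H, Q be real Hilbert spaces, E : U → H and D : U → Q continuous linear maps, and let λ > 0 and β_s > 0. Suppose x ∈ U and s ∈ Q satisfy ⟨E x, E w⟩ + λ ⟨D x, D w⟩ = ⟨s, D w⟩ for all w ∈ U, and suppose there exists w_p ∈ U with D w_p = s and ‖E w_p‖ ≤ β_s⁻¹ ‖s‖. Then ‖s‖² ≤ (β_s⁻² + λ)(‖E x‖² + λ ‖D x‖²), i.e., (β_s⁻² + λ)⁻¹ ‖s‖² ≤ ‖E x‖² + λ ‖D x‖². -/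
open scoped RealInnerProductSpace

/-! Testing the variational equation with the inf-sup lift `w_p` of `s` gives
`‖s‖² = ⟪E x, E w_p⟫ + λ⟪D x, s⟫ ≤ (β_s⁻¹‖E x‖ + λ‖D x‖)‖s‖`, hence `‖s‖ ≤ β_s⁻¹‖E x‖ + λ‖D x‖`.
Squaring and applying the Cauchy–Schwarz inequality for the weights `(1, λ)` to the vectors
`(β_s⁻¹, 1)` and `(‖E x‖, ‖D x‖)` gives the bound. -/

-- The two sides differ by `lam * (c * b - a) ^ 2`.
lemma sq_add_mul_le_mul_sq_add_mul {c a b lam : ℝ} (hlam : 0 ≤ lam) :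
    (c * a + lam * b) ^ 2 ≤ (c ^ 2 + lam) * (a ^ 2 + lam * b ^ 2) := by
  nlinarith [mul_nonneg hlam (sq_nonneg (c * b - a))]

lemma sq_le_sq_of_sq_le_mul_self {t m : ℝ} (ht : 0 ≤ t) (h : t ^ 2 ≤ m * t) : t ^ 2 ≤ m ^ 2 := by
  rcases ht.eq_or_lt with rfl | ht
  · simpa using sq_nonneg m
  · have htm : t ≤ m := le_of_mul_le_mul_right (by nlinarith) ht
    exact pow_le_pow_left₀ ht.le htm 2

lemma norm_sq_le_of_forall_inner_eq {U H Q : Type*}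
    [NormedAddCommGroup U] [InnerProductSpace ℝ U]
    [NormedAddCommGroup H] [InnerProductSpace ℝ H]
    [NormedAddCommGroup Q] [InnerProductSpace ℝ Q]
    (E : U →L[ℝ] H) (D : U →L[ℝ] Q) {lam : ℝ} (hlam : 0 ≤ lam)
    {x wp : U} {s : Q} (hx : ∀ w : U, ⟪E x, E w⟫ + lam * ⟪D x, D w⟫ = ⟪s, D w⟫)
    (hwp : D wp = s) :
    ‖s‖ ^ 2 ≤ ‖E x‖ * ‖E wp‖ + lam * (‖D x‖ * ‖s‖) := by
  have htest := hx wp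
  rw [hwp, real_inner_self_eq_norm_sq] at htest
  rw [← htest]
  gcongr
  · exact real_inner_le_norm _ _
  · exact real_inner_le_norm _ _

theorem infsup_pressure_estimate_general
    {U H Q : Type*}
    [NormedAddCommGroup U] [InnerProductSpace ℝ U]
    [NormedAddCommGroup H] [InnerProductSpace ℝ H]
    [NormedAddCommGroup Q] [InnerProductSpace ℝ Q]
    (E : U →L[ℝ] H) (D : U →L[ℝ] Q)
    (lam βs : ℝ) (hlam : 0 < lam)
    (x : U) (s : Q)
    (hx : ∀ w : U, ⟪E x, E w⟫ + lam * ⟪D x, D w⟫ = ⟪s, D w⟫)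
    (hwp : ∃ wp : U, D wp = s ∧ ‖E wp‖ ≤ βs⁻¹ * ‖s‖) :
    ‖s‖ ^ 2 ≤ ((βs ^ 2)⁻¹ + lam) * (‖E x‖ ^ 2 + lam * ‖D x‖ ^ 2) ∧
      ((βs ^ 2)⁻¹ + lam)⁻¹ * ‖s‖ ^ 2 ≤ ‖E x‖ ^ 2 + lam * ‖D x‖ ^ 2 := by
  obtain ⟨wp, hDwp, hEwp⟩ := hwp
  have hs : ‖s‖ ^ 2 ≤ (βs⁻¹ * ‖E x‖ + lam * ‖D x‖) * ‖s‖ :=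
    calc ‖s‖ ^ 2 ≤ ‖E x‖ * ‖E wp‖ + lam * (‖D x‖ * ‖s‖) :=
          norm_sq_le_of_forall_inner_eq E D hlam.le hx hDwp
      _ ≤ ‖E x‖ * (βs⁻¹ * ‖s‖) + lam * (‖D x‖ * ‖s‖) := by gcongr
      _ = (βs⁻¹ * ‖E x‖ + lam * ‖D x‖) * ‖s‖ := by ring
  have key : ‖s‖ ^ 2 ≤ ((βs ^ 2)⁻¹ + lam) * (‖E x‖ ^ 2 + lam * ‖D x‖ ^ 2) := by
    rw [← inv_pow]
    exact (sq_le_sq_of_sq_le_mul_self (norm_nonneg s) hs).trans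
      (sq_add_mul_le_mul_sq_add_mul hlam.le)
  refine ⟨key, ?_⟩
  rw [inv_mul_le_iff₀ (by positivity)]
  exact key

/-- Abstract inf-sup step in the proof of Theorem 2: if
`⟨E x, E w⟩ + λ⟨D x, D w⟩ = ⟨s, D w⟩` for all `w`, and there is `w_p` with `D w_p = s`
and `‖E w_p‖ ≤ β_s⁻¹ ‖s‖`, then `‖s‖² ≤ (β_s⁻² + λ)(‖E x‖² + λ‖D x‖²)`, i.e.
`(β_s⁻² + λ)⁻¹ ‖s‖² ≤ ‖E x‖² + λ‖D x‖²`. -/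
theorem infsup_pressure_estimate
    {U H Q : Type*}
    [NormedAddCommGroup U] [InnerProductSpace ℝ U] [CompleteSpace U]
    [NormedAddCommGroup H] [InnerProductSpace ℝ H] [CompleteSpace H]
    [NormedAddCommGroup Q] [InnerProductSpace ℝ Q] [CompleteSpace Q]
    (E : U →L[ℝ] H) (D : U →L[ℝ] Q)
    (lam βs : ℝ) (hlam : 0 < lam) (hβs : 0 < βs)
    (x : U) (s : Q)
    (hx : ∀ w : U, ⟪E x, E w⟫ + lam * ⟪D x, D w⟫ = ⟪s, D w⟫)
    (hwp : ∃ wp : U, D wp = s ∧ ‖E wp‖ ≤ βs⁻¹ * ‖s‖) :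
    ‖s‖ ^ 2 ≤ ((βs ^ 2)⁻¹ + lam) * (‖E x‖ ^ 2 + lam * ‖D x‖ ^ 2) ∧
      ((βs ^ 2)⁻¹ + lam)⁻¹ * ‖s‖ ^ 2 ≤ ‖E x‖ ^ 2 + lam * ‖D x‖ ^ 2 :=
  infsup_pressure_estimate_general E D lam βs hlam x s hx hwp
end

section
/- In the fixed-stress error framework (continuous), if L ≥ 1/(λ + c_K²), then for every m ≥ 0: (1/2)(‖E e_u^{m+1}‖² + λ ‖D e_u^{m+1}‖²) + Σᵢ Rᵢ⁻¹ ‖e_{v,i}^{m+1}‖² + Σᵢ,ⱼ Mᵢⱼ ⟨e_{p,j}^{m+1}, e_{p,i}^{m+1}⟩ + (L/2) ‖Σᵢ e_{p,i}^{m+1}‖² ≤ (L/2) ‖Σᵢ e_{p,i}^m‖². -/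
/-!
Testing the flow equations with the new flux and pressure errors turns the left-hand side
into `½ a(u', u') - a(u', u) + L⟪S, S'⟫ - (L/2)‖S'‖²`, where `a` is the elasticity form,
`u, u'` the consecutive displacement errors and `S, S'` the consecutive total pressure
errors. The elasticity equations give `a(u' - u, w) = ⟪S' - S, D w⟫`; by Cauchy–Schwarz and
Korn this yields `(λ + c_K²) a(u' - u, u' - u) ≤ ‖S' - S‖²`, so `a(u' - u, u' - u) ≤ L‖S' - S‖²`.
Expanding both squares, the claim reduces to `0 ≤ a(u, u)`.
-/

open scoped RealInnerProductSpace

lemma mul_le_sq_of_le_mul_of_mul_sq_le {K X b c : ℝ} (hK : 0 < K) (hX : X ≤ c * b)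
    (hb : K * b ^ 2 ≤ X) : K * X ≤ c ^ 2 := by
  -- AM-GM: `2 K c b ≤ c² + K² b²`
  nlinarith [sq_nonneg (c - K * b)]

section ElasticForm

variable {U H Q : Type*} [NormedAddCommGroup U] [InnerProductSpace ℝ U]
  [NormedAddCommGroup H] [InnerProductSpace ℝ H] [NormedAddCommGroup Q] [InnerProductSpace ℝ Q]
  (E : U →L[ℝ] H) (D : U →L[ℝ] Q) (lam : ℝ)

def elasticForm (u w : U) : ℝ := ⟪E u, E w⟫ + lam * ⟪D u, D w⟫

lemma elasticForm_self (u : U) : elasticForm E D lam u u = ‖E u‖ ^ 2 + lam * ‖D u‖ ^ 2 := by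
  simp only [elasticForm, real_inner_self_eq_norm_sq]

lemma elasticForm_sub_left (u v w : U) :
    elasticForm E D lam (u - v) w = elasticForm E D lam u w - elasticForm E D lam v w := by
  simp only [elasticForm, map_sub, inner_sub_left]
  ring

lemma elasticForm_sub_self (u v : U) :
    elasticForm E D lam (u - v) (u - v)
      = elasticForm E D lam u u - 2 * elasticForm E D lam u v + elasticForm E D lam v v := by
  simp only [elasticForm, map_sub, inner_sub_left, inner_sub_right, real_inner_comm (E u),
    real_inner_comm (D u)]
  ring

variable {E D lam}

lemma elasticForm_self_nonneg (hlam : 0 ≤ lam) (u : U) : 0 ≤ elasticForm E D lam u u := by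
  rw [elasticForm_self]
  positivity

lemma mul_norm_sq_le_elasticForm_self {cK : ℝ} (hcK : 0 ≤ cK)
    (hKorn : ∀ w : U, cK * ‖D w‖ ≤ ‖E w‖) (w : U) :
    (lam + cK ^ 2) * ‖D w‖ ^ 2 ≤ elasticForm E D lam w w := by
  have hsq : (cK * ‖D w‖) ^ 2 ≤ ‖E w‖ ^ 2 :=
    pow_le_pow_left₀ (by positivity) (hKorn w) 2
  rw [elasticForm_self]
  linarith [mul_pow cK ‖D w‖ 2]

lemma elasticForm_self_le_of_eq_inner {cK L : ℝ} (hcK : 0 ≤ cK) (hK : 0 < lam + cK ^ 2)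
    (hKorn : ∀ w : U, cK * ‖D w‖ ≤ ‖E w‖) (hLge : 1 / (lam + cK ^ 2) ≤ L) {w : U} {r : Q}
    (hw : elasticForm E D lam w w = ⟪r, D w⟫) :
    elasticForm E D lam w w ≤ L * ‖r‖ ^ 2 := by
  have hmul : (lam + cK ^ 2) * elasticForm E D lam w w ≤ ‖r‖ ^ 2 :=
    mul_le_sq_of_le_mul_of_mul_sq_le hK (hw ▸ real_inner_le_norm r (D w))
      (mul_norm_sq_le_elasticForm_self hcK hKorn w)
  have hLK : 1 ≤ L * (lam + cK ^ 2) := (div_le_iff₀ hK).mp hLge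
  nlinarith [sq_nonneg ‖r‖]

end ElasticForm

lemma flow_energy_identity {ι Q : Type*} [Fintype ι] [NormedAddCommGroup Q]
    [InnerProductSpace ℝ Q] {V : ι → Type*} [∀ i, NormedAddCommGroup (V i)]
    [∀ i, InnerProductSpace ℝ (V i)] {Dv : ∀ i, V i →L[ℝ] Q} {M : Matrix ι ι ℝ}
    {L : ℝ} {Rinv : ι → ℝ} {v : ∀ i, V i} {p p' : ι → Q} {g : Q}
    (hpressure : ∀ q : ι → Q,
      -(∑ i, ⟪Dv i (v i), q i⟫) - ∑ i, ∑ j, M i j * ⟪p' j, q i⟫ - L * ⟪∑ j, p' j, ∑ i, q i⟫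
        = -(L * ⟪∑ j, p j, ∑ i, q i⟫) + ⟪g, ∑ i, q i⟫)
    (hflux : ∀ z : ∀ i, V i, ∑ i, Rinv i * ⟪v i, z i⟫ - ∑ i, ⟪p' i, Dv i (z i)⟫ = 0) :
    ∑ i, Rinv i * ‖v i‖ ^ 2 + ∑ i, ∑ j, M i j * ⟪p' j, p' i⟫ + L * ‖∑ i, p' i‖ ^ 2
      = L * ⟪∑ i, p i, ∑ i, p' i⟫ - ⟪g, ∑ i, p' i⟫ := by
  have hv : ∑ i, Rinv i * ‖v i‖ ^ 2 = ∑ i, ⟪Dv i (v i), p' i⟫ := by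
    simpa only [real_inner_self_eq_norm_sq, real_inner_comm (p' _), sub_eq_zero] using hflux v
  rw [hv, ← real_inner_self_eq_norm_sq]
  linarith [hpressure p']

theorem fixed_stress_lemma1_general
    {U H Q : Type*}
    [NormedAddCommGroup U] [InnerProductSpace ℝ U]
    [NormedAddCommGroup H] [InnerProductSpace ℝ H]
    [NormedAddCommGroup Q] [InnerProductSpace ℝ Q]
    (n : ℕ)
    (V : Fin n → Type*)
    [∀ i, NormedAddCommGroup (V i)] [∀ i, InnerProductSpace ℝ (V i)]
    (E : U →L[ℝ] H) (D : U →L[ℝ] Q) (Dv : ∀ i, V i →L[ℝ] Q)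
    (lam L cK : ℝ) (Rinv : Fin n → ℝ)
    (hlam : 0 < lam) (hcK : 0 < cK)
    (M : Matrix (Fin n) (Fin n) ℝ)
    (hKorn : ∀ w : U, cK * ‖D w‖ ≤ ‖E w‖)
    (eu : ℕ → U) (ev : ℕ → ∀ i, V i) (ep : ℕ → Fin n → Q)
    (heq1 : ∀ (m : ℕ) (q : Fin n → Q),
      -(∑ i, ⟪Dv i (ev (m + 1) i), q i⟫)
          - ∑ i, ∑ j, M i j * ⟪ep (m + 1) j, q i⟫
          - L * ⟪∑ j, ep (m + 1) j, ∑ i, q i⟫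
        = -(L * ⟪∑ j, ep m j, ∑ i, q i⟫) + ⟪D (eu m), ∑ i, q i⟫)
    (heq2 : ∀ (m : ℕ) (z : ∀ i, V i),
      ∑ i, Rinv i * ⟪ev (m + 1) i, z i⟫ - ∑ i, ⟪ep (m + 1) i, Dv i (z i)⟫ = 0)
    (heq3 : ∀ (m : ℕ) (w : U),
      ⟪E (eu m), E w⟫ + lam * ⟪D (eu m), D w⟫ = ⟪∑ i, ep m i, D w⟫)
    (hLge : 1 / (lam + cK ^ 2) ≤ L) :
    ∀ m : ℕ,
      (1 / 2) * (‖E (eu (m + 1))‖ ^ 2 + lam * ‖D (eu (m + 1))‖ ^ 2)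
          + ∑ i, Rinv i * ‖ev (m + 1) i‖ ^ 2
          + ∑ i, ∑ j, M i j * ⟪ep (m + 1) j, ep (m + 1) i⟫
          + (L / 2) * ‖∑ i, ep (m + 1) i‖ ^ 2
        ≤ (L / 2) * ‖∑ i, ep m i‖ ^ 2 := by
  intro m
  have hflow := flow_energy_identity (heq1 m) (heq2 m)
  set u := eu m
  set u' := eu (m + 1)
  set S := ∑ i, ep m i
  set S' := ∑ i, ep (m + 1) i
  have hcross : elasticForm E D lam u' u = ⟪S', D u⟫ := heq3 (m + 1) u
  have hdiff : elasticForm E D lam (u' - u) (u' - u) = ⟪S' - S, D (u' - u)⟫ := by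
    rw [elasticForm_sub_left, inner_sub_left]
    exact congrArg₂ (· - ·) (heq3 (m + 1) _) (heq3 m _)
  have hkey := elasticForm_self_le_of_eq_inner hcK.le (by positivity) hKorn hLge hdiff
  rw [elasticForm_sub_self, norm_sub_sq_real, real_inner_comm S] at hkey
  rw [← elasticForm_self]
  linarith [elasticForm_self_nonneg hlam.le (E := E) (D := D) u, real_inner_comm S' (D u)]

/-- Lemma 1 of the paper: in the fixed-stress error framework (continuous), if
`L ≥ 1/(λ + c_K²)`, then for every `m ≥ 0` the errors of the `(m+1)`-st fixed-stress
iterate satisfy the contraction-type energy estimate. -/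
theorem fixed_stress_lemma1
    {U H Q : Type*}
    [NormedAddCommGroup U] [InnerProductSpace ℝ U] [CompleteSpace U]
    [NormedAddCommGroup H] [InnerProductSpace ℝ H] [CompleteSpace H]
    [NormedAddCommGroup Q] [InnerProductSpace ℝ Q] [CompleteSpace Q]
    (n : ℕ) (hn : 1 ≤ n)
    (V : Fin n → Type*)
    [∀ i, NormedAddCommGroup (V i)] [∀ i, InnerProductSpace ℝ (V i)]
    [∀ i, CompleteSpace (V i)]
    (E : U →L[ℝ] H) (D : U →L[ℝ] Q) (Dv : ∀ i, V i →L[ℝ] Q)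
    (lam L cK : ℝ) (Rinv : Fin n → ℝ)
    (hlam : 0 < lam) (hL : 0 < L) (hRinv : ∀ i, 0 < Rinv i) (hcK : 0 < cK)
    (M : Matrix (Fin n) (Fin n) ℝ) (hM : M.PosSemidef)
    (hKorn : ∀ w : U, cK * ‖D w‖ ≤ ‖E w‖)
    (eu : ℕ → U) (ev : ℕ → ∀ i, V i) (ep : ℕ → Fin n → Q)
    (heq1 : ∀ (m : ℕ) (q : Fin n → Q),
      -(∑ i, ⟪Dv i (ev (m + 1) i), q i⟫)
          - ∑ i, ∑ j, M i j * ⟪ep (m + 1) j, q i⟫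
          - L * ⟪∑ j, ep (m + 1) j, ∑ i, q i⟫
        = -(L * ⟪∑ j, ep m j, ∑ i, q i⟫) + ⟪D (eu m), ∑ i, q i⟫)
    (heq2 : ∀ (m : ℕ) (z : ∀ i, V i),
      ∑ i, Rinv i * ⟪ev (m + 1) i, z i⟫ - ∑ i, ⟪ep (m + 1) i, Dv i (z i)⟫ = 0)
    (heq3 : ∀ (m : ℕ) (w : U),
      ⟪E (eu m), E w⟫ + lam * ⟪D (eu m), D w⟫ = ⟪∑ i, ep m i, D w⟫)
    (hLge : 1 / (lam + cK ^ 2) ≤ L) :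
    ∀ m : ℕ,
      (1 / 2) * (‖E (eu (m + 1))‖ ^ 2 + lam * ‖D (eu (m + 1))‖ ^ 2)
          + ∑ i, Rinv i * ‖ev (m + 1) i‖ ^ 2
          + ∑ i, ∑ j, M i j * ⟪ep (m + 1) j, ep (m + 1) i⟫
          + (L / 2) * ‖∑ i, ep (m + 1) i‖ ^ 2
        ≤ (L / 2) * ‖∑ i, ep m i‖ ^ 2 :=
  fixed_stress_lemma1_general n V E D Dv lam L cK Rinv hlam hcK M hKorn eu ev ep heq1 heq2 heq3 hLge
end

section
/- In the fixed-stress error framework (continuous), assume additionally that there is β_s > 0 such that for every s ∈ Q there exists w ∈ U with D w = s and ‖E w‖ ≤ β_s⁻¹ ‖s‖, and that L ≥ 1/(λ + c_K²). Then for every m ≥ 0: (L⁻¹/(β_s⁻² + λ) + 1) ‖Σᵢ e_{p,i}^{m+1}‖² ≤ ‖Σᵢ e_{p,i}^m‖². In particular ‖Σᵢ e_{p,i}^{m+1}‖² ≤ rate² ‖Σᵢ e_{p,i}^m‖² with rate² = 1/(L⁻¹/(β_s⁻² + λ) + 1) < 1. -/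
/-!
Write `pᵐ = ∑ᵢ e_{p,i}^m` and `‖u‖ₐ² = ‖E u‖² + λ‖D u‖²`. Testing the flow equations with the new
pressures, the Darcy term and the storage term `M` are nonnegative, which leaves
`L‖pᵐ⁺¹‖² + ⟪D uᵐ, pᵐ⁺¹⟫ ≤ L⟪pᵐ, pᵐ⁺¹⟫`. By the elasticity equation the cross term is the energy
inner product of `uᵐ⁺¹` and `uᵐ`. Polarizing both inner products, the energy of the increment
`uᵐ⁺¹ - uᵐ` appears; Korn's inequality bounds it by `‖pᵐ⁺¹ - pᵐ‖² / (λ + c_K²) ≤ L‖pᵐ⁺¹ - pᵐ‖²`,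
so it is absorbed and `L‖pᵐ⁺¹‖² + ‖uᵐ⁺¹‖ₐ² ≤ L‖pᵐ‖²`. Finally the inf-sup condition, applied to
the elasticity equation with the test function `w` that realizes `D w = pᵐ⁺¹`, gives
`‖pᵐ⁺¹‖² ≤ (β_s⁻² + λ)‖uᵐ⁺¹‖ₐ²`.
-/
open scoped RealInnerProductSpace

theorem Matrix.PosSemidef.sum_mul_inner_nonneg {ι E : Type*} [Fintype ι]
    [NormedAddCommGroup E] [InnerProductSpace ℝ E] {M : Matrix ι ι ℝ} (hM : M.PosSemidef)
    (p : ι → E) : 0 ≤ ∑ i, ∑ j, M i j * ⟪p j, p i⟫ := by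
  simpa [dotProduct, mulVec, real_inner_comm] using
    (hM.hadamard (posSemidef_gram ℝ p)).dotProduct_mulVec_nonneg 1

section Elasticity

variable {U H Q : Type*} [NormedAddCommGroup U] [NormedSpace ℝ U]
  [NormedAddCommGroup H] [InnerProductSpace ℝ H] [NormedAddCommGroup Q] [InnerProductSpace ℝ Q]
  (E : U →L[ℝ] H) (D : U →L[ℝ] Q) (lam : ℝ)

def elasticEnergy (u : U) : ℝ := ‖E u‖ ^ 2 + lam * ‖D u‖ ^ 2

def IsElasticSolution (u : U) (p : Q) : Prop :=
  ∀ w, ⟪E u, E w⟫ + lam * ⟪D u, D w⟫ = ⟪p, D w⟫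

variable {E D lam}

variable (E D) in
theorem elasticEnergy_nonneg (hlam : 0 ≤ lam) (u : U) : 0 ≤ elasticEnergy E D lam u := by
  unfold elasticEnergy; positivity

theorem elasticEnergy_sub (u w : U) :
    elasticEnergy E D lam (u - w) =
      elasticEnergy E D lam u - 2 * (⟪E u, E w⟫ + lam * ⟪D u, D w⟫) + elasticEnergy E D lam w := by
  simp only [elasticEnergy, map_sub, norm_sub_sq_real]
  ring

namespace IsElasticSolution

variable {u u' : U} {p p' : Q}

theorem sub (h : IsElasticSolution E D lam u p) (h' : IsElasticSolution E D lam u' p') :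
    IsElasticSolution E D lam (u - u') (p - p') := fun w => by
  rw [map_sub, map_sub, inner_sub_left, inner_sub_left, inner_sub_left, ← h w, ← h' w]
  ring

theorem elasticEnergy_eq (h : IsElasticSolution E D lam u p) :
    elasticEnergy E D lam u = ⟪p, D u⟫ := by
  rw [← h u, elasticEnergy, real_inner_self_eq_norm_sq, real_inner_self_eq_norm_sq]

theorem mul_elasticEnergy_le_of_korn {cK : ℝ} (hlam : 0 ≤ lam) (hcK : 0 ≤ cK)
    (hKorn : cK * ‖D u‖ ≤ ‖E u‖) (h : IsElasticSolution E D lam u p) :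
    (lam + cK ^ 2) * elasticEnergy E D lam u ≤ ‖p‖ ^ 2 := by
  have hupper : elasticEnergy E D lam u ≤ ‖p‖ * ‖D u‖ :=
    h.elasticEnergy_eq ▸ real_inner_le_norm _ _
  have hlower : (lam + cK ^ 2) * ‖D u‖ ^ 2 ≤ elasticEnergy E D lam u := by
    have : (cK * ‖D u‖) ^ 2 ≤ ‖E u‖ ^ 2 := by gcongr
    rw [elasticEnergy]
    linarith
  have hκ : 0 ≤ lam + cK ^ 2 := by positivity
  -- with `κ = lam + cK²` and `e` the energy: `κ e ≤ κ ‖p‖ ‖D u‖ ≤ (‖p‖² + κ² ‖D u‖²) / 2 ≤ (‖p‖² + κ e) / 2`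
  nlinarith [mul_le_mul_of_nonneg_left hupper hκ, mul_le_mul_of_nonneg_left hlower hκ,
    sq_nonneg (‖p‖ - (lam + cK ^ 2) * ‖D u‖)]

theorem sq_norm_le_of_infSup {C : ℝ} (hlam : 0 ≤ lam) (h : IsElasticSolution E D lam u p)
    (hinfsup : ∃ w, D w = p ∧ ‖E w‖ ≤ C * ‖p‖) :
    ‖p‖ ^ 2 ≤ (C ^ 2 + lam) * elasticEnergy E D lam u := by
  obtain ⟨w, rfl, hw⟩ := hinfsup
  have hE : 0 ≤ elasticEnergy E D lam u := elasticEnergy_nonneg E D hlam u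
  rcases (norm_nonneg (D w)).eq_or_lt with hzero | hpos
  · rw [← hzero, sq, zero_mul]
    exact mul_nonneg (by positivity) hE
  have hbound : ‖D w‖ ≤ C * ‖E u‖ + lam * ‖D u‖ := by
    refine le_of_mul_le_mul_left ?_ hpos
    calc ‖D w‖ * ‖D w‖ = ⟪E u, E w⟫ + lam * ⟪D u, D w⟫ := by
          rw [h w, real_inner_self_eq_norm_mul_norm]
      _ ≤ ‖E u‖ * ‖E w‖ + lam * (‖D u‖ * ‖D w‖) := by
          gcongr
          · exact real_inner_le_norm _ _
          · exact real_inner_le_norm _ _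
      _ ≤ ‖E u‖ * (C * ‖D w‖) + lam * (‖D u‖ * ‖D w‖) := by gcongr
      _ = ‖D w‖ * (C * ‖E u‖ + lam * ‖D u‖) := by ring
  calc ‖D w‖ ^ 2 ≤ (C * ‖E u‖ + lam * ‖D u‖) ^ 2 := by gcongr
    _ ≤ (C ^ 2 + lam) * elasticEnergy E D lam u := by
      -- weighted Cauchy–Schwarz in ℝ²: the gap is `lam * (‖E u‖ - C * ‖D u‖) ^ 2`
      rw [elasticEnergy]
      nlinarith [mul_nonneg hlam (sq_nonneg (‖E u‖ - C * ‖D u‖))]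

theorem add_elasticEnergy_le {L cK : ℝ} {P P' : Q} (hlam : 0 ≤ lam) (hcK : 0 ≤ cK)
    (hL : 1 ≤ L * (lam + cK ^ 2)) (hKorn : cK * ‖D (u' - u)‖ ≤ ‖E (u' - u)‖)
    (h : IsElasticSolution E D lam u P) (h' : IsElasticSolution E D lam u' P')
    (hflow : L * ‖P'‖ ^ 2 + ⟪D u, P'⟫ ≤ L * ⟪P, P'⟫) :
    L * ‖P'‖ ^ 2 + elasticEnergy E D lam u' ≤ L * ‖P‖ ^ 2 := by
  have hincrement : elasticEnergy E D lam (u' - u) ≤ L * ‖P' - P‖ ^ 2 := by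
    have hkorn := (h'.sub h).mul_elasticEnergy_le_of_korn hlam hcK hKorn
    have hL0 : 0 ≤ L := by
      by_contra! hneg
      nlinarith [show 0 ≤ lam + cK ^ 2 by positivity]
    nlinarith [elasticEnergy_nonneg E D hlam (u' - u), mul_le_mul_of_nonneg_left hkorn hL0]
  have hcross : ⟪D u, P'⟫ = ⟪E u', E u⟫ + lam * ⟪D u', D u⟫ := by
    rw [h' u]
    exact real_inner_comm _ _
  rw [elasticEnergy_sub, norm_sub_sq_real, real_inner_comm P] at hincrement
  linarith [elasticEnergy_nonneg E D hlam u]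

end IsElasticSolution

end Elasticity

theorem mul_sq_norm_sum_add_inner_le_of_flow {ι Q : Type*} [Fintype ι]
    [NormedAddCommGroup Q] [InnerProductSpace ℝ Q] {V : ι → Type*}
    [∀ i, NormedAddCommGroup (V i)] [∀ i, InnerProductSpace ℝ (V i)]
    {Dv : ∀ i, V i →L[ℝ] Q} {Rinv : ι → ℝ} {M : Matrix ι ι ℝ} {L : ℝ}
    (hRinv : ∀ i, 0 ≤ Rinv i) (hM : M.PosSemidef) {v : ∀ i, V i} {p : ι → Q} {P g : Q}
    (hflow : ∀ q : ι → Q,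
      -(∑ i, ⟪Dv i (v i), q i⟫) - ∑ i, ∑ j, M i j * ⟪p j, q i⟫ - L * ⟪∑ j, p j, ∑ i, q i⟫
        = -(L * ⟪P, ∑ i, q i⟫) + ⟪g, ∑ i, q i⟫)
    (hdarcy : ∀ z : ∀ i, V i, ∑ i, Rinv i * ⟪v i, z i⟫ - ∑ i, ⟪p i, Dv i (z i)⟫ = 0) :
    L * ‖∑ i, p i‖ ^ 2 + ⟪g, ∑ i, p i⟫ ≤ L * ⟪P, ∑ i, p i⟫ := by
  have hvelocity : 0 ≤ ∑ i, ⟪Dv i (v i), p i⟫ := by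
    calc 0 ≤ ∑ i, Rinv i * ⟪v i, v i⟫ :=
          Finset.sum_nonneg fun i _ => mul_nonneg (hRinv i) real_inner_self_nonneg
      _ = ∑ i, ⟪p i, Dv i (v i)⟫ := sub_eq_zero.mp (hdarcy v)
      _ = ∑ i, ⟪Dv i (v i), p i⟫ := Finset.sum_congr rfl fun i _ => real_inner_comm _ _
  have h := hflow p
  rw [real_inner_self_eq_norm_sq] at h
  linarith [hM.sum_mul_inner_nonneg p]

theorem fixed_stress_contraction_general
    {U H Q : Type*}
    [NormedAddCommGroup U] [InnerProductSpace ℝ U]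
    [NormedAddCommGroup H] [InnerProductSpace ℝ H]
    [NormedAddCommGroup Q] [InnerProductSpace ℝ Q]
    (n : ℕ)
    (V : Fin n → Type*)
    [∀ i, NormedAddCommGroup (V i)] [∀ i, InnerProductSpace ℝ (V i)]
    (E : U →L[ℝ] H) (D : U →L[ℝ] Q) (Dv : ∀ i, V i →L[ℝ] Q)
    (lam L cK : ℝ) (Rinv : Fin n → ℝ)
    (hlam : 0 < lam) (hL : 0 < L) (hRinv : ∀ i, 0 < Rinv i) (hcK : 0 < cK)
    (M : Matrix (Fin n) (Fin n) ℝ) (hM : M.PosSemidef)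
    (hKorn : ∀ w : U, cK * ‖D w‖ ≤ ‖E w‖)
    (eu : ℕ → U) (ev : ℕ → ∀ i, V i) (ep : ℕ → Fin n → Q)
    (heq1 : ∀ (m : ℕ) (q : Fin n → Q),
      -(∑ i, ⟪Dv i (ev (m + 1) i), q i⟫)
          - ∑ i, ∑ j, M i j * ⟪ep (m + 1) j, q i⟫
          - L * ⟪∑ j, ep (m + 1) j, ∑ i, q i⟫
        = -(L * ⟪∑ j, ep m j, ∑ i, q i⟫) + ⟪D (eu m), ∑ i, q i⟫)
    (heq2 : ∀ (m : ℕ) (z : ∀ i, V i),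
      ∑ i, Rinv i * ⟪ev (m + 1) i, z i⟫ - ∑ i, ⟪ep (m + 1) i, Dv i (z i)⟫ = 0)
    (heq3 : ∀ (m : ℕ) (w : U),
      ⟪E (eu m), E w⟫ + lam * ⟪D (eu m), D w⟫ = ⟪∑ i, ep m i, D w⟫)
    (hLge : 1 / (lam + cK ^ 2) ≤ L)
    (βs : ℝ)
    (hinfsup : ∀ s : Q, ∃ w : U, D w = s ∧ ‖E w‖ ≤ βs⁻¹ * ‖s‖) :
    (∀ m : ℕ,
      (L⁻¹ / ((βs ^ 2)⁻¹ + lam) + 1) * ‖∑ i, ep (m + 1) i‖ ^ 2 ≤ ‖∑ i, ep m i‖ ^ 2) ∧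
    (∀ m : ℕ,
      ‖∑ i, ep (m + 1) i‖ ^ 2
        ≤ (1 / (L⁻¹ / ((βs ^ 2)⁻¹ + lam) + 1)) * ‖∑ i, ep m i‖ ^ 2) ∧
    1 / (L⁻¹ / ((βs ^ 2)⁻¹ + lam) + 1) < 1 := by
  have hsol : ∀ m, IsElasticSolution E D lam (eu m) (∑ i, ep m i) := heq3
  have hLκ : 1 ≤ L * (lam + cK ^ 2) := by rwa [div_le_iff₀ (by positivity)] at hLge
  set S := (βs ^ 2)⁻¹ + lam
  have hS : 0 < S := by positivity
  have contraction : ∀ m, (L⁻¹ / S + 1) * ‖∑ i, ep (m + 1) i‖ ^ 2 ≤ ‖∑ i, ep m i‖ ^ 2 := by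
    intro m
    have hstep := (hsol m).add_elasticEnergy_le hlam.le hcK.le hLκ (hKorn _) (hsol (m + 1))
      (mul_sq_norm_sum_add_inner_le_of_flow (fun i => (hRinv i).le) hM (heq1 m) (heq2 m))
    have hpressure := (hsol (m + 1)).sq_norm_le_of_infSup hlam.le (hinfsup _)
    rw [inv_pow] at hpressure
    calc (L⁻¹ / S + 1) * ‖∑ i, ep (m + 1) i‖ ^ 2
        = L⁻¹ * (‖∑ i, ep (m + 1) i‖ ^ 2 / S + L * ‖∑ i, ep (m + 1) i‖ ^ 2) := by
          field_simp
      _ ≤ L⁻¹ * (elasticEnergy E D lam (eu (m + 1)) + L * ‖∑ i, ep (m + 1) i‖ ^ 2) := by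
          gcongr
          rwa [div_le_iff₀' hS]
      _ ≤ L⁻¹ * (L * ‖∑ i, ep m i‖ ^ 2) := by gcongr; linarith
      _ = ‖∑ i, ep m i‖ ^ 2 := by field_simp
  refine ⟨contraction, fun m => ?_,
    (div_lt_one (by positivity)).2 (lt_add_of_pos_left 1 (by positivity))⟩
  rw [one_div, ← div_eq_inv_mul, le_div_iff₀' (by positivity)]
  exact contraction m

/-- Theorem 2 ((error_sum_p)–(rate_gen)) of the paper: under the abstract Stokes inf-sup
condition with constant β_s and L ≥ 1/(λ + c_K²), the fixed-stress iteration contracts: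
(L⁻¹/(β_s⁻² + λ) + 1)‖Σᵢ e_{p,i}^{m+1}‖² ≤ ‖Σᵢ e_{p,i}^m‖², and in particular
‖Σᵢ e_{p,i}^{m+1}‖² ≤ rate²‖Σᵢ e_{p,i}^m‖² with rate² = 1/(L⁻¹/(β_s⁻² + λ) + 1) < 1. -/
theorem fixed_stress_contraction
    {U H Q : Type*}
    [NormedAddCommGroup U] [InnerProductSpace ℝ U] [CompleteSpace U]
    [NormedAddCommGroup H] [InnerProductSpace ℝ H] [CompleteSpace H]
    [NormedAddCommGroup Q] [InnerProductSpace ℝ Q] [CompleteSpace Q]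
    (n : ℕ) (hn : 1 ≤ n)
    (V : Fin n → Type*)
    [∀ i, NormedAddCommGroup (V i)] [∀ i, InnerProductSpace ℝ (V i)]
    [∀ i, CompleteSpace (V i)]
    (E : U →L[ℝ] H) (D : U →L[ℝ] Q) (Dv : ∀ i, V i →L[ℝ] Q)
    (lam L cK : ℝ) (Rinv : Fin n → ℝ)
    (hlam : 0 < lam) (hL : 0 < L) (hRinv : ∀ i, 0 < Rinv i) (hcK : 0 < cK)
    (M : Matrix (Fin n) (Fin n) ℝ) (hM : M.PosSemidef)
    (hKorn : ∀ w : U, cK * ‖D w‖ ≤ ‖E w‖)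
    (eu : ℕ → U) (ev : ℕ → ∀ i, V i) (ep : ℕ → Fin n → Q)
    (heq1 : ∀ (m : ℕ) (q : Fin n → Q),
      -(∑ i, ⟪Dv i (ev (m + 1) i), q i⟫)
          - ∑ i, ∑ j, M i j * ⟪ep (m + 1) j, q i⟫
          - L * ⟪∑ j, ep (m + 1) j, ∑ i, q i⟫
        = -(L * ⟪∑ j, ep m j, ∑ i, q i⟫) + ⟪D (eu m), ∑ i, q i⟫)
    (heq2 : ∀ (m : ℕ) (z : ∀ i, V i),
      ∑ i, Rinv i * ⟪ev (m + 1) i, z i⟫ - ∑ i, ⟪ep (m + 1) i, Dv i (z i)⟫ = 0)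
    (heq3 : ∀ (m : ℕ) (w : U),
      ⟪E (eu m), E w⟫ + lam * ⟪D (eu m), D w⟫ = ⟪∑ i, ep m i, D w⟫)
    (hLge : 1 / (lam + cK ^ 2) ≤ L)
    (βs : ℝ) (hβs : 0 < βs)
    (hinfsup : ∀ s : Q, ∃ w : U, D w = s ∧ ‖E w‖ ≤ βs⁻¹ * ‖s‖) :
    (∀ m : ℕ,
      (L⁻¹ / ((βs ^ 2)⁻¹ + lam) + 1) * ‖∑ i, ep (m + 1) i‖ ^ 2 ≤ ‖∑ i, ep m i‖ ^ 2) ∧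
    (∀ m : ℕ,
      ‖∑ i, ep (m + 1) i‖ ^ 2
        ≤ (1 / (L⁻¹ / ((βs ^ 2)⁻¹ + lam) + 1)) * ‖∑ i, ep m i‖ ^ 2) ∧
    1 / (L⁻¹ / ((βs ^ 2)⁻¹ + lam) + 1) < 1 :=
  fixed_stress_contraction_general n V E D Dv lam L cK Rinv hlam hL hRinv hcK M hM hKorn eu ev ep
    heq1 heq2 heq3 hLge βs hinfsup
end

section
/- In the fixed-stress error framework (continuous), assume additionally that there is β_s > 0 such that for every s ∈ Q there exists w ∈ U with D w = s and ‖E w‖ ≤ β_s⁻¹ ‖s‖, and that L ≥ 1/(λ + c_K²). Set ρ² := 1/(L⁻¹/(β_s⁻² + λ) + 1) and, for m ≥ 0, g^m := −L Σᵢ e_{p,i}^m + D e_u^m − D e_u^{m+1} ∈ Q. Then for every m ≥ 0: ‖g^m‖ ≤ 3 L ρ^m ‖Σᵢ e_{p,i}^0‖. -/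
open scoped RealInnerProductSpace

/-!
With `s_m = Σᵢ e_{p,i}^m` and the energy form `a = ⟪E ·, E ·⟫ + λ ⟪D ·, D ·⟫`, the elasticity
equation says that `e_u^m` solves `a(e_u^m, w) = ⟪s_m, D w⟫`. Korn's inequality together with
`L ≥ 1/(λ + c_K²)` bounds any solution of `a(u, w) = ⟪t, D w⟫` by `‖D u‖ ≤ L ‖t‖` and
`a(u, u) ≤ L ‖t‖²`, while the inf-sup condition gives `‖t‖² ≤ (β_s⁻² + λ) a(u, u)`. Testing the
pressure equation with the new pressures (flux and exchange terms are nonnegative) and applying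
the second bound to the difference `e_u^m - e_u^{m+1}` yields
`L ‖s_{m+1}‖² + a(e_u^{m+1}, e_u^{m+1}) ≤ L ‖s_m‖²`, hence `‖s_{m+1}‖ ≤ ρ ‖s_m‖`. Each of the
three terms of `g^m` is then at most `L ‖s_m‖ ≤ L ρ^m ‖s_0‖`.
-/

open Matrix in
/-- By the Schur product theorem, `M ⊙ gram ℝ p` is positive semidefinite; the sum is its
quadratic form at the all-ones vector. -/
lemma Matrix.PosSemidef.sum_sum_mul_inner_nonneg {ι Q : Type*} [Fintype ι]
    [NormedAddCommGroup Q] [InnerProductSpace ℝ Q] {M : Matrix ι ι ℝ} (hM : M.PosSemidef)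
    (p : ι → Q) : 0 ≤ ∑ i, ∑ j, M i j * ⟪p j, p i⟫ := by
  have h := (hM.hadamard (posSemidef_gram ℝ p)).dotProduct_mulVec_nonneg 1
  simpa [dotProduct, mulVec, real_inner_comm] using h

section WeakSolution

variable {U X Q : Type*} [AddCommGroup U] [Module ℝ U]
  [NormedAddCommGroup X] [InnerProductSpace ℝ X] [NormedAddCommGroup Q] [InnerProductSpace ℝ Q]

def IsWeakSolution (A : U →ₗ[ℝ] X) (D : U →ₗ[ℝ] Q) (t : Q) (u : U) : Prop :=
  ∀ w, ⟪A u, A w⟫ = ⟪t, D w⟫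

namespace IsWeakSolution

variable {A : U →ₗ[ℝ] X} {D : U →ₗ[ℝ] Q} {t t' : Q} {u u' : U} {L : ℝ}

lemma sub (h : IsWeakSolution A D t u) (h' : IsWeakSolution A D t' u') :
    IsWeakSolution A D (t - t') (u - u') := fun w => by
  rw [map_sub, inner_sub_left, inner_sub_left, h w, h' w]

lemma norm_sq_eq (h : IsWeakSolution A D t u) : ‖A u‖ ^ 2 = ⟪t, D u⟫ := by
  rw [← real_inner_self_eq_norm_sq, h u]

lemma norm_sq_le_mul_norm (h : IsWeakSolution A D t u) : ‖A u‖ ^ 2 ≤ ‖t‖ * ‖D u‖ :=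
  h.norm_sq_eq ▸ real_inner_le_norm t (D u)

lemma norm_le (h : IsWeakSolution A D t u) (hL : 0 ≤ L)
    (hcoer : ∀ w, ‖D w‖ ^ 2 ≤ L * ‖A w‖ ^ 2) : ‖D u‖ ≤ L * ‖t‖ := by
  rcases (norm_nonneg (D u)).eq_or_lt with hDu | hDu
  · rw [← hDu]
    positivity
  refine le_of_mul_le_mul_right ?_ hDu
  calc ‖D u‖ * ‖D u‖ = ‖D u‖ ^ 2 := (sq _).symm
    _ ≤ L * ‖A u‖ ^ 2 := hcoer u
    _ ≤ L * (‖t‖ * ‖D u‖) := mul_le_mul_of_nonneg_left h.norm_sq_le_mul_norm hL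
    _ = L * ‖t‖ * ‖D u‖ := by ring

lemma norm_sq_le (h : IsWeakSolution A D t u) (hL : 0 ≤ L)
    (hcoer : ∀ w, ‖D w‖ ^ 2 ≤ L * ‖A w‖ ^ 2) : ‖A u‖ ^ 2 ≤ L * ‖t‖ ^ 2 :=
  calc ‖A u‖ ^ 2 ≤ ‖t‖ * ‖D u‖ := h.norm_sq_le_mul_norm
    _ ≤ ‖t‖ * (L * ‖t‖) := mul_le_mul_of_nonneg_left (h.norm_le hL hcoer) (norm_nonneg t)
    _ = L * ‖t‖ ^ 2 := by ring

/-- Cauchy–Schwarz in `‖t‖² = ⟪A u, A w⟫`. -/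
lemma norm_sq_le_of_lift {K : ℝ} (h : IsWeakSolution A D t u) (hK : 0 ≤ K) {w : U}
    (hw : D w = t) (hAw : ‖A w‖ ^ 2 ≤ K * ‖t‖ ^ 2) : ‖t‖ ^ 2 ≤ K * ‖A u‖ ^ 2 := by
  have hcs : ‖t‖ ^ 2 ≤ ‖A u‖ * ‖A w‖ :=
    calc ‖t‖ ^ 2 = ⟪A u, A w⟫ := by rw [h w, hw, real_inner_self_eq_norm_sq]
      _ ≤ ‖A u‖ * ‖A w‖ := real_inner_le_norm _ _
  rcases (norm_nonneg t).eq_or_lt with ht | ht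
  · rw [← ht, zero_pow two_ne_zero]
    positivity
  refine le_of_mul_le_mul_right ?_ (pow_pos ht 2)
  calc ‖t‖ ^ 2 * ‖t‖ ^ 2 ≤ (‖A u‖ * ‖A w‖) ^ 2 := by
        rw [← sq]; exact pow_le_pow_left₀ (by positivity) hcs 2
    _ = ‖A u‖ ^ 2 * ‖A w‖ ^ 2 := mul_pow _ _ 2
    _ ≤ ‖A u‖ ^ 2 * (K * ‖t‖ ^ 2) := mul_le_mul_of_nonneg_left hAw (by positivity)
    _ = K * ‖A u‖ ^ 2 * ‖t‖ ^ 2 := by ring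

/-- The difference `u - u'` solves the problem with load `t - t'`, so its energy is at most
`L ‖t - t'‖²`. -/
lemma energy_step (h : IsWeakSolution A D t u) (h' : IsWeakSolution A D t' u')
    (hL : 0 ≤ L) (hcoer : ∀ w, ‖D w‖ ^ 2 ≤ L * ‖A w‖ ^ 2)
    (hstep : L * ‖t'‖ ^ 2 + ⟪D u, t'⟫ ≤ L * ⟪t, t'⟫) :
    L * ‖t'‖ ^ 2 + ‖A u'‖ ^ 2 ≤ L * ‖t‖ ^ 2 := by
  have hdiff : ‖A u - A u'‖ ^ 2 ≤ L * ‖t - t'‖ ^ 2 := by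
    simpa only [map_sub] using (h.sub h').norm_sq_le hL hcoer
  have hcross : ⟪D u, t'⟫ = ⟪A u, A u'⟫ := by
    rw [real_inner_comm, ← h' u, real_inner_comm]
  rw [norm_sub_sq_real, norm_sub_sq_real] at hdiff
  nlinarith [sq_nonneg ‖A u‖]

end IsWeakSolution

end WeakSolution

section EnergyMap

variable {U H Q : Type*} [AddCommGroup U] [Module ℝ U]
  [NormedAddCommGroup H] [InnerProductSpace ℝ H] [NormedAddCommGroup Q] [InnerProductSpace ℝ Q]
  {E : U →ₗ[ℝ] H} {D : U →ₗ[ℝ] Q} {lam : ℝ}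

/-- For `0 ≤ lam`, `u ↦ (E u, √lam • D u)` into the `L²` product realises the elastic energy
`‖E u‖² + lam ‖D u‖²` as a squared norm, so that Cauchy–Schwarz is available for it. -/
noncomputable def energyMap (E : U →ₗ[ℝ] H) (D : U →ₗ[ℝ] Q) (lam : ℝ) :
    U →ₗ[ℝ] WithLp 2 (H × Q) :=
  (WithLp.linearEquiv 2 ℝ (H × Q)).symm.toLinearMap ∘ₗ E.prod (√lam • D)

lemma inner_energyMap (hlam : 0 ≤ lam) (u w : U) :
    ⟪energyMap E D lam u, energyMap E D lam w⟫ = ⟪E u, E w⟫ + lam * ⟪D u, D w⟫ := by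
  simp [energyMap, WithLp.prod_inner_apply, real_inner_smul_left, real_inner_smul_right,
    ← mul_assoc, Real.mul_self_sqrt hlam]

lemma norm_energyMap_sq (hlam : 0 ≤ lam) (u : U) :
    ‖energyMap E D lam u‖ ^ 2 = ‖E u‖ ^ 2 + lam * ‖D u‖ ^ 2 := by
  simp only [← real_inner_self_eq_norm_sq, inner_energyMap hlam]

lemma norm_sq_le_mul_norm_energyMap_sq {cK L : ℝ} (hlam : 0 < lam) (hcK : 0 ≤ cK)
    (hKorn : ∀ w, cK * ‖D w‖ ≤ ‖E w‖) (hL : 1 / (lam + cK ^ 2) ≤ L) (w : U) :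
    ‖D w‖ ^ 2 ≤ L * ‖energyMap E D lam w‖ ^ 2 := by
  have hpos : 0 < lam + cK ^ 2 := by positivity
  have hLK : 1 ≤ L * (lam + cK ^ 2) := by rwa [div_le_iff₀ hpos] at hL
  have hKorn_sq : (cK * ‖D w‖) ^ 2 ≤ ‖E w‖ ^ 2 :=
    pow_le_pow_left₀ (by positivity) (hKorn w) 2
  rw [norm_energyMap_sq hlam.le]
  nlinarith [sq_nonneg ‖D w‖, (one_div_pos.mpr hpos).trans_le hL]

lemma norm_energyMap_sq_le {βs : ℝ} (hlam : 0 ≤ lam) {w : U}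
    (hw : ‖E w‖ ≤ βs⁻¹ * ‖D w‖) :
    ‖energyMap E D lam w‖ ^ 2 ≤ ((βs ^ 2)⁻¹ + lam) * ‖D w‖ ^ 2 := by
  have hw_sq : ‖E w‖ ^ 2 ≤ (βs ^ 2)⁻¹ * ‖D w‖ ^ 2 := by
    rw [← inv_pow, ← mul_pow]
    exact pow_le_pow_left₀ (norm_nonneg _) hw 2
  rw [norm_energyMap_sq hlam]
  linarith

end EnergyMap

/-- The fixed-stress pressure update, tested with the new pressures `p'` and fluxes `v`:
the flux term is nonnegative by the Darcy equation, the exchange term by `M ⪰ 0`. -/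
lemma fixed_stress_pressure_step {n : ℕ} {Q : Type*} [NormedAddCommGroup Q]
    [InnerProductSpace ℝ Q] {V : Fin n → Type*} [∀ i, NormedAddCommGroup (V i)]
    [∀ i, InnerProductSpace ℝ (V i)] (Dv : ∀ i, V i → Q) {Rinv : Fin n → ℝ}
    (hRinv : ∀ i, 0 ≤ Rinv i) {M : Matrix (Fin n) (Fin n) ℝ} (hM : M.PosSemidef) (L : ℝ)
    (p p' : Fin n → Q) (v : ∀ i, V i) (f : Q)
    (hpressure : -(∑ i, ⟪Dv i (v i), p' i⟫) - ∑ i, ∑ j, M i j * ⟪p' j, p' i⟫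
        - L * ⟪∑ j, p' j, ∑ i, p' i⟫ = -(L * ⟪∑ j, p j, ∑ i, p' i⟫) + ⟪f, ∑ i, p' i⟫)
    (hflux : ∑ i, Rinv i * ⟪v i, v i⟫ - ∑ i, ⟪p' i, Dv i (v i)⟫ = 0) :
    L * ‖∑ i, p' i‖ ^ 2 + ⟪f, ∑ i, p' i⟫ ≤ L * ⟪∑ i, p i, ∑ i, p' i⟫ := by
  have hflux_nonneg : 0 ≤ ∑ i, ⟪Dv i (v i), p' i⟫ := by
    have hsymm : ∑ i, ⟪p' i, Dv i (v i)⟫ = ∑ i, ⟪Dv i (v i), p' i⟫ :=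
      Finset.sum_congr rfl fun i _ => real_inner_comm _ _
    rw [← hsymm, ← sub_eq_zero.mp hflux]
    exact Finset.sum_nonneg fun i _ => mul_nonneg (hRinv i) real_inner_self_nonneg
  have hexchange_nonneg := hM.sum_sum_mul_inner_nonneg p'
  rw [real_inner_self_eq_norm_sq] at hpressure
  linarith

lemma le_sqrt_mul_of_energy_le {L K a b c : ℝ} (hL : 0 < L) (hK : 0 < K) (ha : 0 ≤ a)
    (hc : 0 ≤ c) (henergy : L * a ^ 2 + b ≤ L * c ^ 2) (hinfsup : a ^ 2 ≤ K * b) :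
    a ≤ √(1 / (L⁻¹ / K + 1)) * c := by
  rw [← Real.sqrt_sq ha, ← Real.sqrt_sq hc, ← Real.sqrt_mul (by positivity)]
  refine Real.sqrt_le_sqrt ?_
  rw [one_div_mul_eq_div, le_div_iff₀ (by positivity)]
  field_simp
  nlinarith

lemma norm_neg_smul_add_sub_le_of_contract {Q : Type*} [NormedAddCommGroup Q]
    [NormedSpace ℝ Q] {L ρ : ℝ} (hL : 0 ≤ L) (hρ : 0 ≤ ρ) (hρ_le_one : ρ ≤ 1)
    {s d : ℕ → Q} (hcontract : ∀ m, ‖s (m + 1)‖ ≤ ρ * ‖s m‖) (hd : ∀ m, ‖d m‖ ≤ L * ‖s m‖)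
    (m : ℕ) : ‖-(L • s m) + d m - d (m + 1)‖ ≤ 3 * L * ρ ^ m * ‖s 0‖ := by
  have hdecay : ‖s m‖ ≤ ρ ^ m * ‖s 0‖ :=
    le_geom (u := fun m => ‖s m‖) hρ m fun k _ => hcontract k
  have hmono : ‖s (m + 1)‖ ≤ ‖s m‖ :=
    (hcontract m).trans (mul_le_of_le_one_left (norm_nonneg _) hρ_le_one)
  calc ‖-(L • s m) + d m - d (m + 1)‖ ≤ ‖L • s m‖ + ‖d m‖ + ‖d (m + 1)‖ := by
        rw [← norm_neg (L • s m)]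
        exact norm_sub_le_of_le (norm_add_le _ _) le_rfl
    _ ≤ L * ‖s m‖ + L * ‖s m‖ + L * ‖s m‖ := by
        rw [norm_smul, Real.norm_of_nonneg hL]
        gcongr
        exacts [hd m, (hd (m + 1)).trans (mul_le_mul_of_nonneg_left hmono hL)]
    _ = 3 * L * ‖s m‖ := by ring
    _ ≤ 3 * L * (ρ ^ m * ‖s 0‖) := by gcongr
    _ = 3 * L * ρ ^ m * ‖s 0‖ := by ring

theorem fixed_stress_rhs_bound_general
    {U H Q : Type*}
    [NormedAddCommGroup U] [InnerProductSpace ℝ U]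
    [NormedAddCommGroup H] [InnerProductSpace ℝ H]
    [NormedAddCommGroup Q] [InnerProductSpace ℝ Q]
    (n : ℕ)
    (V : Fin n → Type*)
    [∀ i, NormedAddCommGroup (V i)] [∀ i, InnerProductSpace ℝ (V i)]
    (E : U →L[ℝ] H) (D : U →L[ℝ] Q) (Dv : ∀ i, V i →L[ℝ] Q)
    (lam L cK : ℝ) (Rinv : Fin n → ℝ)
    (hlam : 0 < lam) (hL : 0 < L) (hRinv : ∀ i, 0 < Rinv i) (hcK : 0 < cK)
    (M : Matrix (Fin n) (Fin n) ℝ) (hM : M.PosSemidef)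
    (hKorn : ∀ w : U, cK * ‖D w‖ ≤ ‖E w‖)
    (eu : ℕ → U) (ev : ℕ → ∀ i, V i) (ep : ℕ → Fin n → Q)
    (heq1 : ∀ (m : ℕ) (q : Fin n → Q),
      -(∑ i, ⟪Dv i (ev (m + 1) i), q i⟫)
          - ∑ i, ∑ j, M i j * ⟪ep (m + 1) j, q i⟫
          - L * ⟪∑ j, ep (m + 1) j, ∑ i, q i⟫
        = -(L * ⟪∑ j, ep m j, ∑ i, q i⟫) + ⟪D (eu m), ∑ i, q i⟫)
    (heq2 : ∀ (m : ℕ) (z : ∀ i, V i),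
      ∑ i, Rinv i * ⟪ev (m + 1) i, z i⟫ - ∑ i, ⟪ep (m + 1) i, Dv i (z i)⟫ = 0)
    (heq3 : ∀ (m : ℕ) (w : U),
      ⟪E (eu m), E w⟫ + lam * ⟪D (eu m), D w⟫ = ⟪∑ i, ep m i, D w⟫)
    (hLge : 1 / (lam + cK ^ 2) ≤ L)
    (βs : ℝ)
    (hinfsup : ∀ s : Q, ∃ w : U, D w = s ∧ ‖E w‖ ≤ βs⁻¹ * ‖s‖)
    (ρ2 : ℝ) (hρ2 : ρ2 = 1 / (L⁻¹ / ((βs ^ 2)⁻¹ + lam) + 1))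
    (g : ℕ → Q)
    (hg : ∀ m : ℕ, g m = -(L • ∑ i, ep m i) + D (eu m) - D (eu (m + 1))) :
    ∀ m : ℕ, ‖g m‖ ≤ 3 * L * Real.sqrt ρ2 ^ m * ‖∑ i, ep 0 i‖ := by
  set s : ℕ → Q := fun m => ∑ i, ep m i
  set A := energyMap (E : U →ₗ[ℝ] H) (D : U →ₗ[ℝ] Q) lam
  have hsol (m : ℕ) : IsWeakSolution A D (s m) (eu m) := fun w => by
    rw [inner_energyMap hlam.le]
    exact heq3 m w
  have hcoer : ∀ w, ‖D w‖ ^ 2 ≤ L * ‖A w‖ ^ 2 :=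
    norm_sq_le_mul_norm_energyMap_sq hlam hcK.le hKorn hLge
  have hK : 0 < (βs ^ 2)⁻¹ + lam := by positivity
  have hcontract (m : ℕ) : ‖s (m + 1)‖ ≤ √ρ2 * ‖s m‖ := by
    obtain ⟨w, hw, hEw⟩ := hinfsup (s (m + 1))
    rw [← hw] at hEw
    have hAw : ‖A w‖ ^ 2 ≤ ((βs ^ 2)⁻¹ + lam) * ‖s (m + 1)‖ ^ 2 := by
      rw [← hw]
      exact norm_energyMap_sq_le hlam.le hEw
    have hstep := fixed_stress_pressure_step (fun i => Dv i) (fun i => (hRinv i).le) hM L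
      (ep m) (ep (m + 1)) (ev (m + 1)) (D (eu m)) (heq1 m _) (heq2 m _)
    rw [hρ2]
    exact le_sqrt_mul_of_energy_le hL hK (norm_nonneg _) (norm_nonneg _)
      ((hsol m).energy_step (hsol (m + 1)) hL.le hcoer hstep)
      ((hsol (m + 1)).norm_sq_le_of_lift hK.le hw hAw)
  have hρ_le_one : √ρ2 ≤ 1 := by
    rw [Real.sqrt_le_one, hρ2, div_le_one (by positivity)]
    have : 0 ≤ L⁻¹ / ((βs ^ 2)⁻¹ + lam) := by positivity
    linarith
  intro m
  rw [hg]
  exact norm_neg_smul_add_sub_le_of_contract hL.le (Real.sqrt_nonneg _) hρ_le_one hcontract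
    (fun m => (hsol m).norm_le hL.le hcoer) m

/-- Right-hand-side bound (error:stability1) in the proof of Theorem 3: with
g^m = −L Σᵢ e_{p,i}^m + D e_u^m − D e_u^{m+1} and ρ the contraction rate,
‖g^m‖ ≤ 3 L ρ^m ‖Σᵢ e_{p,i}^0‖. -/
theorem fixed_stress_rhs_bound
    {U H Q : Type*}
    [NormedAddCommGroup U] [InnerProductSpace ℝ U] [CompleteSpace U]
    [NormedAddCommGroup H] [InnerProductSpace ℝ H] [CompleteSpace H]
    [NormedAddCommGroup Q] [InnerProductSpace ℝ Q] [CompleteSpace Q]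
    (n : ℕ) (hn : 1 ≤ n)
    (V : Fin n → Type*)
    [∀ i, NormedAddCommGroup (V i)] [∀ i, InnerProductSpace ℝ (V i)]
    [∀ i, CompleteSpace (V i)]
    (E : U →L[ℝ] H) (D : U →L[ℝ] Q) (Dv : ∀ i, V i →L[ℝ] Q)
    (lam L cK : ℝ) (Rinv : Fin n → ℝ)
    (hlam : 0 < lam) (hL : 0 < L) (hRinv : ∀ i, 0 < Rinv i) (hcK : 0 < cK)
    (M : Matrix (Fin n) (Fin n) ℝ) (hM : M.PosSemidef)
    (hKorn : ∀ w : U, cK * ‖D w‖ ≤ ‖E w‖)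
    (eu : ℕ → U) (ev : ℕ → ∀ i, V i) (ep : ℕ → Fin n → Q)
    (heq1 : ∀ (m : ℕ) (q : Fin n → Q),
      -(∑ i, ⟪Dv i (ev (m + 1) i), q i⟫)
          - ∑ i, ∑ j, M i j * ⟪ep (m + 1) j, q i⟫
          - L * ⟪∑ j, ep (m + 1) j, ∑ i, q i⟫
        = -(L * ⟪∑ j, ep m j, ∑ i, q i⟫) + ⟪D (eu m), ∑ i, q i⟫)
    (heq2 : ∀ (m : ℕ) (z : ∀ i, V i),
      ∑ i, Rinv i * ⟪ev (m + 1) i, z i⟫ - ∑ i, ⟪ep (m + 1) i, Dv i (z i)⟫ = 0)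
    (heq3 : ∀ (m : ℕ) (w : U),
      ⟪E (eu m), E w⟫ + lam * ⟪D (eu m), D w⟫ = ⟪∑ i, ep m i, D w⟫)
    (hLge : 1 / (lam + cK ^ 2) ≤ L)
    (βs : ℝ) (hβs : 0 < βs)
    (hinfsup : ∀ s : Q, ∃ w : U, D w = s ∧ ‖E w‖ ≤ βs⁻¹ * ‖s‖)
    (ρ2 : ℝ) (hρ2 : ρ2 = 1 / (L⁻¹ / ((βs ^ 2)⁻¹ + lam) + 1))
    (g : ℕ → Q)
    (hg : ∀ m : ℕ, g m = -(L • ∑ i, ep m i) + D (eu m) - D (eu (m + 1))) :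
    ∀ m : ℕ, ‖g m‖ ≤ 3 * L * Real.sqrt ρ2 ^ m * ‖∑ i, ep 0 i‖ :=
  fixed_stress_rhs_bound_general n V E D Dv lam L cK Rinv hlam hL hRinv hcK M hM hKorn eu ev ep heq1
    heq2 heq3 hLge βs hinfsup ρ2 hρ2 g hg
end
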